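/- arXiv:1811.10241 — 2 statements merged into one kernel-verified Lean document; each statement's English description precedes it below -/
import Mathlib

section
/- For fixed real numbers $0 < T_1 < T_2 < T_3$, the function $\psi_{T_1,T_2,T_3}(\vartheta) = \Big(\frac{e^{-\vartheta T_3} - e^{-\vartheta T_2}}{e^{-\vartheta T_2} - e^{-\vartheta T_1}}\Big)^2$ maps $(0,\infty)$ into the open interval $\big(0, \big(\frac{T_3 - T_2}{T_2 - T_1}\big)^2\big)$. -/
/-- for `0 < T₁ < T₂ < T₃`, the map
`ψ(ϑ) = ((e^{-ϑT₃} - e^{-ϑT₂})/(e^{-ϑT₂} - e^{-ϑT₁}))²` maps `(0,∞)` into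
`(0, ((T₃-T₂)/(T₂-T₁))²)`. -/
theorem stmt_3 (T₁ T₂ T₃ : ℝ) (hT₁ : 0 < T₁) (h12 : T₁ < T₂) (h23 : T₂ < T₃) :
    ∀ ϑ : ℝ, 0 < ϑ →
      ((Real.exp (-ϑ * T₃) - Real.exp (-ϑ * T₂)) /
        (Real.exp (-ϑ * T₂) - Real.exp (-ϑ * T₁))) ^ 2 ∈
        Set.Ioo (0 : ℝ) (((T₃ - T₂) / (T₂ - T₁)) ^ 2) := by
  intro ϑ hϑ
  have hconv : StrictConvexOn ℝ Set.univ (fun x => Real.exp (-ϑ * x)) := by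
    refine ⟨convex_univ, fun x _ y _ hxy a b ha hb hab => ?_⟩
    have hne : -ϑ * x ≠ -ϑ * y := by
      intro h
      exact hxy (mul_left_cancel₀ (neg_ne_zero.2 hϑ.ne') h)
    have h := strictConvexOn_exp.2 (Set.mem_univ (-ϑ * x)) (Set.mem_univ (-ϑ * y))
      hne ha hb hab
    simp only [smul_eq_mul] at h ⊢
    rw [show -ϑ * (a * x + b * y) = a * (-ϑ * x) + b * (-ϑ * y) by ring]
    exact h
  have hslope := hconv.slope_strict_mono_adjacent (Set.mem_univ T₁) (Set.mem_univ T₃) h12 h23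
  set f : ℝ → ℝ := fun x => Real.exp (-ϑ * x) with hf
  have hfmono : ∀ {a b : ℝ}, a < b → f b < f a := by
    intro a b hab
    exact Real.exp_lt_exp.2 (by nlinarith)
  have hA : 0 < f T₁ - f T₂ := sub_pos.2 (hfmono h12)
  have hB : 0 < f T₂ - f T₃ := sub_pos.2 (hfmono h23)
  have hd1 : 0 < T₂ - T₁ := sub_pos.2 h12
  have hd2 : 0 < T₃ - T₂ := sub_pos.2 h23
  have hkey : (f T₂ - f T₃) * (T₂ - T₁) < (f T₁ - f T₂) * (T₃ - T₂) := by
    have h1 := (div_lt_div_iff₀ hd1 hd2).1 hslope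
    nlinarith
  have heq : (f T₃ - f T₂) / (f T₂ - f T₁) = (f T₂ - f T₃) / (f T₁ - f T₂) := by
    rw [← neg_div_neg_eq]; ring_nf
  have hratio_pos : 0 < (f T₃ - f T₂) / (f T₂ - f T₁) := by
    rw [heq]; exact div_pos hB hA
  have hratio_lt : (f T₃ - f T₂) / (f T₂ - f T₁) < (T₃ - T₂) / (T₂ - T₁) := by
    rw [heq, div_lt_div_iff₀ hA hd1]
    linarith
  constructor
  · positivity
  · exact pow_lt_pow_left₀ hratio_lt hratio_pos.le (by norm_num)
end

section
/- Let $Y : [0,T] \to \mathbb{R}$ be a measurable function with $\sup_{0 < t \le T} t^{-s}\omega(Y)_t < \infty$ for some $s > 1/2$, where $\omega(Y)_t = \sup_{|h| \le t}\big(\int_0^T (Y_{u+h} - Y_u)^2\,du\big)^{1/2}$ (with $Y$ extended by $Y_T$ beyond $T$ and $Y_0$ before $0$). For $n \ge 1$ and $\Delta_n = T/n$, set $S_n = \Delta_n^{-1}\sum_{i=1}^n \big(\int_{(i-1)\Delta_n}^{i\Delta_n} Y_t\,dt\big)^2$. Then $S_n \to \int_0^T Y_t^2\,dt$ as $n \to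 \infty$. -/
open Filter MeasureTheory Set

private lemma my_ii {g : ℝ → ℝ} (hg : AEStronglyMeasurable g volume) {K : ℝ}
    (hK : ∀ t, |g t| ≤ K) (a b : ℝ) : IntervalIntegrable g volume a b := by
  rw [intervalIntegrable_iff]
  haveI : IsFiniteMeasure (volume.restrict (Set.uIoc a b)) :=
    ⟨by rw [Measure.restrict_apply_univ, Set.uIoc]; exact measure_Ioc_lt_top⟩
  exact (integrable_const K).mono' hg.restrict
    (Filter.Eventually.of_forall fun t => by simpa [Real.norm_eq_abs] using hK t)

private lemma my_prod {F : ℝ × ℝ → ℝ} (hF : Measurable F) {K : ℝ}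
    (hK : ∀ p, |F p| ≤ K) (s t : Set ℝ) (hs : volume s ≠ ⊤) (ht : volume t ≠ ⊤) :
    Integrable F ((volume.restrict s).prod (volume.restrict t)) := by
  haveI : IsFiniteMeasure (volume.restrict s) :=
    ⟨by rw [Measure.restrict_apply_univ]; exact hs.lt_top⟩
  haveI : IsFiniteMeasure (volume.restrict t) :=
    ⟨by rw [Measure.restrict_apply_univ]; exact ht.lt_top⟩
  exact (integrable_const K).mono' hF.aestronglyMeasurable
    (Filter.Eventually.of_forall fun p => by simpa [Real.norm_eq_abs] using hK p)

private lemma block_identity {g : ℝ → ℝ} (hg : Measurable g) {M : ℝ}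
    (hM : ∀ t, |g t| ≤ M) (a b : ℝ) :
    (∫ u in a..b, ∫ v in a..b, (g u - g v) ^ 2) =
      2 * (b - a) * (∫ u in a..b, (g u) ^ 2) - 2 * (∫ u in a..b, g u) ^ 2 := by
  have hgI : IntervalIntegrable g volume a b := my_ii hg.aestronglyMeasurable hM a b
  have hg2b : ∀ t, |(g t) ^ 2| ≤ M ^ 2 := fun t => by
    rw [abs_pow]; exact pow_le_pow_left₀ (abs_nonneg _) (hM t) 2
  have hg2I : IntervalIntegrable (fun v => (g v) ^ 2) volume a b :=
    my_ii ((hg.pow_const 2).aestronglyMeasurable) hg2b a b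
  have inner : ∀ u : ℝ, (∫ v in a..b, (g u - g v) ^ 2) =
      ((b - a) * (g u) ^ 2 + (∫ v in a..b, (g v) ^ 2))
        - (2 * (∫ v in a..b, g v)) * g u := by
    intro u
    have h1 : (fun v => (g u - g v) ^ 2)
        = fun v => ((g u) ^ 2 + (g v) ^ 2) - (2 * g u) * g v := by
      funext v; ring
    rw [h1, intervalIntegral.integral_sub (intervalIntegrable_const.add hg2I)
        (hgI.const_mul _),
      intervalIntegral.integral_add intervalIntegrable_const hg2I,
      intervalIntegral.integral_const_mul, intervalIntegral.integral_const, smul_eq_mul]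
    ring
  calc (∫ u in a..b, ∫ v in a..b, (g u - g v) ^ 2)
      = ∫ u in a..b, (((b - a) * (g u) ^ 2 + (∫ v in a..b, (g v) ^ 2))
          - (2 * (∫ v in a..b, g v)) * g u) := by
        exact intervalIntegral.integral_congr fun u _ => inner u
    _ = 2 * (b - a) * (∫ u in a..b, (g u) ^ 2) - 2 * (∫ u in a..b, g u) ^ 2 := by
        rw [intervalIntegral.integral_sub ((hg2I.const_mul _).add intervalIntegrable_const)
            (hgI.const_mul _),
          intervalIntegral.integral_add (hg2I.const_mul _) intervalIntegrable_const,
          intervalIntegral.integral_const_mul, intervalIntegral.integral_const_mul,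
          intervalIntegral.integral_const, smul_eq_mul]
        ring

/-- deterministic block-average approximation of the `L²` norm: if the
`L²` modulus of continuity of `Y` (extended by `Y 0` on the left, `Y T` on the right)
is `O(t^s)` with `s > 1/2`, then
`Δₙ⁻¹ ∑ (∫ block Y)² → ∫_0^T Y²`. -/
theorem stmt_9 (T : ℝ) (hT : 0 < T) (s : ℝ) (hs : 1/2 < s) (Y : ℝ → ℝ)
    (hmeas : Measurable Y) (hbdd : ∃ M : ℝ, ∀ t : ℝ, |Y t| ≤ M)
    (hreg : ∃ C : ℝ, ∀ t ∈ Set.Ioc (0:ℝ) T, ∀ h : ℝ, |h| ≤ t →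
      (∫ u in (0:ℝ)..T,
        (Y (min (max (u + h) 0) T) - Y (min (max u 0) T)) ^ 2) ≤ (C * t ^ s) ^ 2) :
    Tendsto (fun n : ℕ =>
        (T / (n : ℝ))⁻¹ * ∑ i ∈ Finset.range n,
          (∫ t in ((i : ℝ) * (T / (n : ℝ)))..(((i : ℝ) + 1) * (T / (n : ℝ))), Y t) ^ 2)
      atTop (nhds (∫ t in (0:ℝ)..T, (Y t) ^ 2)) := by
  obtain ⟨M, hM⟩ := hbdd
  obtain ⟨C, hC⟩ := hreg
  set Z : ℝ → ℝ := fun u => Y (min (max u 0) T) with hZdef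
  have hZm : Measurable Z :=
    hmeas.comp ((measurable_id.max measurable_const).min measurable_const)
  have hZb : ∀ t, |Z t| ≤ M := fun t => hM _
  have habs : ∀ x y : ℝ, |x - y| ≤ |x| + |y| := fun x y => by
    simpa [sub_eq_add_neg, abs_neg] using abs_add_le x (-y)
  have hZ2b : ∀ t, |(Z t) ^ 2| ≤ M ^ 2 := fun t => by
    rw [abs_pow]; exact pow_le_pow_left₀ (abs_nonneg _) (hZb t) 2
  have hZeq : ∀ t ∈ Set.Icc (0:ℝ) T, Z t = Y t := by
    intro t ht
    simp only [hZdef]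
    rw [max_eq_left ht.1, min_eq_left ht.2]
  -- rewrite target integral
  have hL : (∫ t in (0:ℝ)..T, (Y t) ^ 2) = ∫ t in (0:ℝ)..T, (Z t) ^ 2 := by
    refine intervalIntegral.integral_congr fun t ht => ?_
    rw [Set.uIcc_of_le hT.le] at ht
    rw [hZeq t ht]
  rw [hL]
  -- main convergence for Z
  have key : ∀ n : ℕ, 1 ≤ n →
      (∫ t in (0:ℝ)..T, (Z t) ^ 2) - (C * (T / (n:ℝ)) ^ s) ^ 2 ≤
        (T / (n : ℝ))⁻¹ * ∑ i ∈ Finset.range n,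
          (∫ t in ((i : ℝ) * (T / (n : ℝ)))..(((i : ℝ) + 1) * (T / (n : ℝ))), Z t) ^ 2 ∧
      (T / (n : ℝ))⁻¹ * ∑ i ∈ Finset.range n,
          (∫ t in ((i : ℝ) * (T / (n : ℝ)))..(((i : ℝ) + 1) * (T / (n : ℝ))), Z t) ^ 2 ≤
        (∫ t in (0:ℝ)..T, (Z t) ^ 2) := by
    intro n hn
    have hn0 : (0:ℝ) < (n:ℝ) := by exact_mod_cast hn
    set Δ : ℝ := T / (n:ℝ) with hΔdef
    have hΔpos : 0 < Δ := div_pos hT hn0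
    have hΔT : Δ ≤ T := div_le_self hT.le (by exact_mod_cast hn)
    have hmΔ : -Δ ≤ Δ := by linarith
    have hnT : (n:ℝ) * Δ = T := by rw [hΔdef]; field_simp
    have hblk : ∀ i : ℕ, (i:ℝ) * Δ ≤ ((i:ℝ) + 1) * Δ := fun i => by nlinarith [hΔpos.le]
    have hgap : ∀ i : ℕ, ((i:ℝ) + 1) * Δ - (i:ℝ) * Δ = Δ := fun i => by ring
    have hZ2II : ∀ p q : ℝ, IntervalIntegrable (fun u => (Z u) ^ 2) volume p q :=
      my_ii (hZm.pow_const 2).aestronglyMeasurable hZ2b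
    have hsqb : ∀ x y : ℝ, |(Z x - Z y) ^ 2| ≤ (M + M) ^ 2 := fun x y => by
      rw [abs_pow]
      exact pow_le_pow_left₀ (abs_nonneg _)
        ((habs _ _).trans (add_le_add (hZb x) (hZb y))) 2
    have hGII : ∀ u : ℝ, IntervalIntegrable (fun h => (Z u - Z (h + u)) ^ 2) volume (-Δ) Δ :=
      fun u => my_ii
        ((measurable_const.sub (hZm.comp (measurable_add_const u))).pow_const 2).aestronglyMeasurable
        (fun h => hsqb u (h + u)) _ _
    have hprod1 : ∀ p q : ℝ, Integrable (fun pr : ℝ × ℝ => (Z pr.1 - Z pr.2) ^ 2)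
        ((volume.restrict (Set.Ioc p q)).prod (volume.restrict (Set.Ioc p q))) :=
      fun p q => my_prod
        (((hZm.comp measurable_fst).sub (hZm.comp measurable_snd)).pow_const 2)
        (fun pr => hsqb pr.1 pr.2) _ _ measure_Ioc_lt_top.ne measure_Ioc_lt_top.ne
    have hprod2 : ∀ p q : ℝ, Integrable (fun pr : ℝ × ℝ => (Z pr.1 - Z (pr.2 + pr.1)) ^ 2)
        ((volume.restrict (Set.Ioc p q)).prod (volume.restrict (Set.Ioc (-Δ) Δ))) :=
      fun p q => my_prod
        (((hZm.comp measurable_fst).sub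
          (hZm.comp (measurable_snd.add measurable_fst))).pow_const 2)
        (fun pr => hsqb _ _) _ _ measure_Ioc_lt_top.ne measure_Ioc_lt_top.ne
    set H : ℝ → ℝ := fun u => ∫ h in (-Δ)..Δ, (Z u - Z (h + u)) ^ 2 with hHdef
    have hHInt : ∀ p q : ℝ, p ≤ q → IntervalIntegrable H volume p q := by
      intro p q hpq
      rw [intervalIntegrable_iff_integrableOn_Ioc_of_le hpq]
      refine ((hprod2 p q).integral_prod_left).congr
        (Filter.Eventually.of_forall fun u => ?_)
      exact (intervalIntegral.integral_of_le hmΔ).symm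
    have hDInt : ∀ p q : ℝ, p ≤ q →
        IntervalIntegrable (fun u => ∫ v in p..q, (Z u - Z v) ^ 2) volume p q := by
      intro p q hpq
      rw [intervalIntegrable_iff_integrableOn_Ioc_of_le hpq]
      refine ((hprod1 p q).integral_prod_left).congr
        (Filter.Eventually.of_forall fun u => ?_)
      exact (intervalIntegral.integral_of_le hpq).symm
    have hblockle : ∀ p q : ℝ, p ≤ q → q - p = Δ →
        (∫ u in p..q, ∫ v in p..q, (Z u - Z v) ^ 2) ≤ ∫ u in p..q, H u := by
      intro p q hpq hqp
      refine intervalIntegral.integral_mono_on hpq (hDInt p q hpq) (hHInt p q hpq) ?_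
      intro u hu
      have sub1 : (∫ v in p..q, (Z u - Z v) ^ 2)
          = ∫ h in (p - u)..(q - u), (Z u - Z (h + u)) ^ 2 := by
        have h := intervalIntegral.integral_comp_add_right (a := p - u) (b := q - u)
          (fun v => (Z u - Z v) ^ 2) u
        simpa using h.symm
      rw [sub1]
      have h1 : -Δ ≤ p - u := by
        have := hu.2; linarith
      have h2 : q - u ≤ Δ := by
        have := hu.1; linarith
      exact intervalIntegral.integral_mono_interval h1 (by linarith [hu.1, hu.2]) h2
        (Filter.Eventually.of_forall fun h => sq_nonneg _) (hGII u)
    have hDnn : ∀ p q : ℝ, p ≤ q →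
        0 ≤ ∫ u in p..q, ∫ v in p..q, (Z u - Z v) ^ 2 := by
      intro p q hpq
      exact intervalIntegral.integral_nonneg hpq fun u _ =>
        intervalIntegral.integral_nonneg hpq fun v _ => sq_nonneg _
    have hsumB : (∑ i ∈ Finset.range n,
        ∫ u in ((i:ℝ) * Δ)..(((i:ℝ) + 1) * Δ), (Z u) ^ 2)
        = ∫ u in (0:ℝ)..T, (Z u) ^ 2 := by
      have h := intervalIntegral.sum_integral_adjacent_intervals (μ := volume)
        (a := fun k : ℕ => (k:ℝ) * Δ) (n := n) (f := fun u => (Z u) ^ 2)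
        (fun k _ => hZ2II _ _)
      simp only [Nat.cast_zero, zero_mul, Nat.cast_add, Nat.cast_one, hnT] at h
      exact h
    have hsumH : (∑ i ∈ Finset.range n,
        ∫ u in ((i:ℝ) * Δ)..(((i:ℝ) + 1) * Δ), H u)
        = ∫ u in (0:ℝ)..T, H u := by
      have h := intervalIntegral.sum_integral_adjacent_intervals (μ := volume)
        (a := fun k : ℕ => (k:ℝ) * Δ) (n := n) (f := H)
        (fun k _ => hHInt _ _ (by push_cast; exact hblk k))
      simp only [Nat.cast_zero, zero_mul, Nat.cast_add, Nat.cast_one, hnT] at h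
      exact h
    have hHbound : (∫ u in (0:ℝ)..T, H u) ≤ 2 * Δ * (C * Δ ^ s) ^ 2 := by
      haveI : IsFiniteMeasure (volume.restrict (Set.Ioc (-Δ) Δ)) :=
        ⟨by rw [Measure.restrict_apply_univ]; exact measure_Ioc_lt_top⟩
      have huncurry : Function.uncurry (fun u h => (Z u - Z (h + u)) ^ 2)
          = fun pr : ℝ × ℝ => (Z pr.1 - Z (pr.2 + pr.1)) ^ 2 := rfl
      have hswap := MeasureTheory.integral_integral_swap
        (f := fun u h => (Z u - Z (h + u)) ^ 2)
        (μ := volume.restrict (Set.Ioc (0:ℝ) T)) (ν := volume.restrict (Set.Ioc (-Δ) Δ))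
        (by rw [huncurry]; exact hprod2 0 T)
      have hstep1 : (∫ u in (0:ℝ)..T, H u)
          = ∫ h in Set.Ioc (-Δ) Δ, (∫ u in Set.Ioc (0:ℝ) T, (Z u - Z (h + u)) ^ 2) := by
        rw [intervalIntegral.integral_of_le hT.le, ← hswap]
        refine setIntegral_congr_fun measurableSet_Ioc fun u _ => ?_
        simp only [hHdef]
        exact intervalIntegral.integral_of_le hmΔ
      rw [hstep1]
      have hconst : (∫ _h in Set.Ioc (-Δ) Δ, (C * Δ ^ s) ^ 2)
          = 2 * Δ * (C * Δ ^ s) ^ 2 := by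
        rw [setIntegral_const, Real.volume_real_Ioc_of_le hmΔ, smul_eq_mul]
        ring
      rw [← hconst]
      refine integral_mono_ae ((hprod2 0 T).integral_prod_right) (integrable_const _) ?_
      filter_upwards [ae_restrict_mem measurableSet_Ioc] with h hh
      have hhabs : |h| ≤ Δ := abs_le.2 ⟨hh.1.le, hh.2⟩
      have hCb := hC Δ ⟨hΔpos, hΔT⟩ h hhabs
      calc (∫ u in Set.Ioc (0:ℝ) T, (Z u - Z (h + u)) ^ 2)
          = ∫ u in (0:ℝ)..T,
              (Y (min (max (u + h) 0) T) - Y (min (max u 0) T)) ^ 2 := by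
            rw [intervalIntegral.integral_of_le hT.le]
            refine setIntegral_congr_fun measurableSet_Ioc fun u _ => ?_
            simp only [hZdef]
            rw [add_comm h u]
            ring
        _ ≤ (C * Δ ^ s) ^ 2 := hCb
    have hid : ∀ i : ℕ,
        (∫ u in ((i:ℝ) * Δ)..(((i:ℝ) + 1) * Δ), (Z u) ^ 2)
          - Δ⁻¹ * (∫ t in ((i:ℝ) * Δ)..(((i:ℝ) + 1) * Δ), Z t) ^ 2
        = (2 * Δ)⁻¹ * ∫ u in ((i:ℝ) * Δ)..(((i:ℝ) + 1) * Δ),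
            ∫ v in ((i:ℝ) * Δ)..(((i:ℝ) + 1) * Δ), (Z u - Z v) ^ 2 := by
      intro i
      rw [block_identity hZm hZb ((i:ℝ) * Δ) (((i:ℝ) + 1) * Δ), hgap i]
      field_simp
    have hdiff : (∫ u in (0:ℝ)..T, (Z u) ^ 2)
        - Δ⁻¹ * (∑ i ∈ Finset.range n,
            (∫ t in ((i:ℝ) * Δ)..(((i:ℝ) + 1) * Δ), Z t) ^ 2)
        = (2 * Δ)⁻¹ * ∑ i ∈ Finset.range n,
            (∫ u in ((i:ℝ) * Δ)..(((i:ℝ) + 1) * Δ),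
              ∫ v in ((i:ℝ) * Δ)..(((i:ℝ) + 1) * Δ), (Z u - Z v) ^ 2) := by
      rw [← hsumB, Finset.mul_sum, Finset.mul_sum, ← Finset.sum_sub_distrib]
      exact Finset.sum_congr rfl fun i _ => hid i
    have hsumle : (∑ i ∈ Finset.range n,
        (∫ u in ((i:ℝ) * Δ)..(((i:ℝ) + 1) * Δ),
          ∫ v in ((i:ℝ) * Δ)..(((i:ℝ) + 1) * Δ), (Z u - Z v) ^ 2))
        ≤ 2 * Δ * (C * Δ ^ s) ^ 2 := by
      calc _ ≤ ∑ i ∈ Finset.range n,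
            ∫ u in ((i:ℝ) * Δ)..(((i:ℝ) + 1) * Δ), H u :=
          Finset.sum_le_sum fun i _ => hblockle _ _ (hblk i) (hgap i)
        _ = ∫ u in (0:ℝ)..T, H u := hsumH
        _ ≤ 2 * Δ * (C * Δ ^ s) ^ 2 := hHbound
    have hsumnn : 0 ≤ ∑ i ∈ Finset.range n,
        (∫ u in ((i:ℝ) * Δ)..(((i:ℝ) + 1) * Δ),
          ∫ v in ((i:ℝ) * Δ)..(((i:ℝ) + 1) * Δ), (Z u - Z v) ^ 2) :=
      Finset.sum_nonneg fun i _ => hDnn _ _ (hblk i)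
    have h2Δinv : (0:ℝ) < (2 * Δ)⁻¹ := by positivity
    constructor
    · have : (2 * Δ)⁻¹ * ∑ i ∈ Finset.range n,
          (∫ u in ((i:ℝ) * Δ)..(((i:ℝ) + 1) * Δ),
            ∫ v in ((i:ℝ) * Δ)..(((i:ℝ) + 1) * Δ), (Z u - Z v) ^ 2)
          ≤ (2 * Δ)⁻¹ * (2 * Δ * (C * Δ ^ s) ^ 2) :=
        mul_le_mul_of_nonneg_left hsumle h2Δinv.le
      have heq : (2 * Δ)⁻¹ * (2 * Δ * (C * Δ ^ s) ^ 2) = (C * Δ ^ s) ^ 2 := by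
        field_simp
      linarith [hdiff, this, heq ▸ this]
    · have : 0 ≤ (2 * Δ)⁻¹ * ∑ i ∈ Finset.range n,
          (∫ u in ((i:ℝ) * Δ)..(((i:ℝ) + 1) * Δ),
            ∫ v in ((i:ℝ) * Δ)..(((i:ℝ) + 1) * Δ), (Z u - Z v) ^ 2) :=
        mul_nonneg h2Δinv.le hsumnn
      linarith [hdiff]
  -- squeeze
  have hb : Tendsto (fun n : ℕ => (∫ t in (0:ℝ)..T, (Z t) ^ 2) - (C * (T / (n:ℝ)) ^ s) ^ 2)
      atTop (nhds (∫ t in (0:ℝ)..T, (Z t) ^ 2)) := by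
    have h1 : Tendsto (fun n : ℕ => T / (n:ℝ)) atTop (nhds 0) :=
      tendsto_const_div_atTop_nhds_zero_nat T
    have h2 : ContinuousAt (fun x : ℝ => (C * x ^ s) ^ 2) 0 := by
      have h3 := Real.continuousAt_rpow_const 0 s (Or.inr (by linarith))
      exact (continuousAt_const.mul h3).pow 2
    have h4 := (h2.tendsto.comp h1)
    have h5 : Tendsto (fun n : ℕ => (C * (T / (n:ℝ)) ^ s) ^ 2) atTop (nhds 0) := by
      convert h4 using 2 <;> simp [Real.zero_rpow (by linarith : s ≠ 0), Function.comp]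
    simpa using tendsto_const_nhds.sub h5
  have hmainZ : Tendsto (fun n : ℕ =>
      (T / (n : ℝ))⁻¹ * ∑ i ∈ Finset.range n,
        (∫ t in ((i : ℝ) * (T / (n : ℝ)))..(((i : ℝ) + 1) * (T / (n : ℝ))), Z t) ^ 2)
      atTop (nhds (∫ t in (0:ℝ)..T, (Z t) ^ 2)) := by
    refine tendsto_of_tendsto_of_tendsto_of_le_of_le' hb tendsto_const_nhds ?_ ?_
    · filter_upwards [Filter.eventually_ge_atTop 1] with n hn
      exact (key n hn).1
    · filter_upwards [Filter.eventually_ge_atTop 1] with n hn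
      exact (key n hn).2
  refine hmainZ.congr fun n => ?_
  congr 1
  refine Finset.sum_congr rfl fun i hi => ?_
  congr 1
  have hi' := Finset.mem_range.1 hi
  have hn : 0 < n := Nat.pos_of_ne_zero (by omega)
  have hΔpos : 0 < T / (n:ℝ) := div_pos hT (by exact_mod_cast hn)
  refine intervalIntegral.integral_congr fun t ht => ?_
  rw [Set.uIcc_of_le (by nlinarith [hΔpos.le] : (i:ℝ) * (T/(n:ℝ)) ≤ ((i:ℝ)+1) * (T/(n:ℝ)))] at ht
  refine hZeq t ⟨le_trans (by positivity) ht.1, le_trans ht.2 ?_⟩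
  have hin : ((i:ℝ) + 1) ≤ (n:ℝ) := by exact_mod_cast hi'
  calc ((i:ℝ)+1) * (T/(n:ℝ)) ≤ (n:ℝ) * (T/(n:ℝ)) := by nlinarith [hΔpos.le]
    _ = T := by field_simp
end
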